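/- Let R be a discrete valuation ring with uniformizer π, B a flat R-algebra, I an ideal of B containing π, and B' = B[I/π] the dilatation. Then the dilatation satisfies the universal property that an R-algebra map g : B → C to a flat R-algebra C factors through B' if and only if the ideal g(I)·C is contained in πC. -/

import Mathlib

/-- Universal property of the affine Néron blow-up: an `R`-algebra map
`g : B → C` to a flat (π-torsion-free) `R`-algebra `C` factors through the
dilatation `B' = B[I/π]` if and only if `g(I)·C ⊆ πC`. -/
theorem stmt_13 (R B C : Type*) [CommRing R] [IsDomain R]
    [IsDiscreteValuationRing R] [CommRing B] [Algebra R B]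
    [CommRing C] [Algebra R C]
    (π : R) (hπ : Irreducible π)
    (hBflat : ∀ b : B, π • b = 0 → b = 0)
    (hCflat : ∀ c : C, π • c = 0 → c = 0)
    (I : Ideal B) (hI : algebraMap R B π ∈ I)
    (L : Type*) [CommRing L] [Algebra B L]
    [IsLocalization.Away (algebraMap R B π) L]
    (B' : Subalgebra B L)
    (hB' : B' = Algebra.adjoin B
      {y : L | ∃ x ∈ I, y * algebraMap B L (algebraMap R B π) = algebraMap B L x})
    (g : B →ₐ[R] C) :
    (∃ g' : B' →+* C, ∀ b : B, g' ⟨algebraMap B L b, B'.algebraMap_mem b⟩ = g b)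
      ↔ I.map g.toRingHom ≤ Ideal.span {algebraMap R C π} := by
  classical
  set p : B := algebraMap R B π with hp
  set φ : B →+* L := (algebraMap B L : B →+* L) with hφdef
  set π' : C := algebraMap R C π with hπ'def
  have hgp : g p = π' := by simp [hp, hπ'def]
  -- cancellation of π' in C
  have hCcancel : ∀ c c' : C, π' * c = π' * c' → c = c' := by
    intro c c' h
    have h0 : π • (c - c') = 0 := by
      rw [Algebra.smul_def, ← hπ'def, mul_sub, h, sub_self]
    exact sub_eq_zero.mp (hCflat _ h0)
  have hCpow : ∀ (n : ℕ) (c c' : C), π' ^ n * c = π' ^ n * c' → c = c' := by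
    intro n
    induction n with
    | zero => intro c c' h; simpa using h
    | succ k ih =>
      intro c c' h
      apply ih
      apply hCcancel
      rw [← mul_assoc, ← mul_assoc, mul_comm π' (π' ^ k), ← pow_succ]
      exact h
  -- cancellation of p in B
  have hBcancel : ∀ b b' : B, p * b = p * b' → b = b' := by
    intro b b' h
    have h0 : π • (b - b') = 0 := by
      rw [Algebra.smul_def, ← hp, mul_sub, h, sub_self]
    exact sub_eq_zero.mp (hBflat _ h0)
  have hBpow : ∀ (n : ℕ) (b b' : B), p ^ n * b = p ^ n * b' → b = b' := by
    intro n
    induction n with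
    | zero => intro b b' h; simpa using h
    | succ k ih =>
      intro b b' h
      apply ih
      apply hBcancel
      rw [← mul_assoc, ← mul_assoc, mul_comm p (p ^ k), ← pow_succ]
      exact h
  -- injectivity of φ
  have hφinj : ∀ b b' : B, φ b = φ b' → b = b' := by
    intro b b' h
    obtain ⟨c, hc⟩ := (IsLocalization.eq_iff_exists (Submonoid.powers p) L).mp h
    obtain ⟨n, hn⟩ := c.2
    have hn' : p ^ n = (c : B) := hn
    apply hBpow n
    rw [hn']; exact hc
  -- surjectivity of localization
  have hsurj : ∀ z : L, ∃ (n : ℕ) (b : B), φ b = φ p ^ n * z := by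
    intro z
    obtain ⟨⟨b, m⟩, hbm⟩ := IsLocalization.surj (Submonoid.powers p) z
    obtain ⟨n, hn⟩ := m.2
    have hn' : p ^ n = (m : B) := hn
    refine ⟨n, b, ?_⟩
    rw [← map_pow, hn']
    rw [mul_comm] at hbm
    exact hbm.symm
  -- the key predicate
  set Spec : L → C → Prop := fun z c => ∀ (n : ℕ) (b : B), φ b = φ p ^ n * z →
    π' ^ n * c = g b with hSpec
  have huniq : ∀ z c c', Spec z c → Spec z c' → c = c' := by
    intro z c c' h1 h2
    obtain ⟨n, b, hb⟩ := hsurj z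
    exact hCpow n _ _ (by rw [h1 n b hb, h2 n b hb])
  have halg : ∀ b₀ : B, Spec (φ b₀) (g b₀) := by
    intro b₀ n b hb
    have hb' : b = p ^ n * b₀ := (hφinj _ _ (by rw [hb, map_mul, map_pow])).symm
    rw [hb', map_mul, map_pow, hgp]
  have hadd : ∀ z₁ z₂ c₁ c₂, Spec z₁ c₁ → Spec z₂ c₂ → Spec (z₁ + z₂) (c₁ + c₂) := by
    intro z₁ z₂ c₁ c₂ h1 h2 n b hb
    obtain ⟨n₁, b₁, hb₁⟩ := hsurj z₁
    obtain ⟨n₂, b₂, hb₂⟩ := hsurj z₂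
    have key : φ (p ^ (n₁ + n₂) * b) = φ (p ^ n * (p ^ n₂ * b₁ + p ^ n₁ * b₂)) := by
      rw [map_mul, map_mul, map_add, map_mul, map_mul, map_pow, map_pow, map_pow, map_pow,
        hb, hb₁, hb₂]
      ring
    have keyB := hφinj _ _ key
    have keyC : π' ^ (n₁ + n₂) * g b = π' ^ n * (π' ^ n₂ * g b₁ + π' ^ n₁ * g b₂) := by
      have := congrArg g keyB
      simpa [map_mul, map_add, map_pow, hgp] using this
    rw [← h1 n₁ b₁ hb₁, ← h2 n₂ b₂ hb₂] at keyC
    apply hCpow (n₁ + n₂)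
    rw [keyC]; ring
  have hmul : ∀ z₁ z₂ c₁ c₂, Spec z₁ c₁ → Spec z₂ c₂ → Spec (z₁ * z₂) (c₁ * c₂) := by
    intro z₁ z₂ c₁ c₂ h1 h2 n b hb
    obtain ⟨n₁, b₁, hb₁⟩ := hsurj z₁
    obtain ⟨n₂, b₂, hb₂⟩ := hsurj z₂
    have key : φ (p ^ (n₁ + n₂) * b) = φ (p ^ n * (b₁ * b₂)) := by
      rw [map_mul, map_mul, map_mul, map_pow, map_pow, hb, hb₁, hb₂]
      ring
    have keyB := hφinj _ _ key
    have keyC : π' ^ (n₁ + n₂) * g b = π' ^ n * (g b₁ * g b₂) := by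
      have := congrArg g keyB
      simpa [map_mul, map_pow, hgp] using this
    rw [← h1 n₁ b₁ hb₁, ← h2 n₂ b₂ hb₂] at keyC
    apply hCpow (n₁ + n₂)
    rw [keyC]; ring
  constructor
  · -- factorization implies g(I) ⊆ πC
    rintro ⟨g', hg'⟩
    rw [Ideal.map_le_iff_le_comap]
    intro x hx
    simp only [Ideal.mem_comap]
    set y : L := IsLocalization.mk' L x (⟨p, Submonoid.mem_powers p⟩ : Submonoid.powers p)
      with hy
    have hyspec : y * φ p = φ x := IsLocalization.mk'_spec L x _
    have hyB' : y ∈ B' := by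
      rw [hB']
      exact Algebra.subset_adjoin ⟨x, hx, hyspec⟩
    have hxeq : (⟨φ x, B'.algebraMap_mem x⟩ : B') =
        (⟨y, hyB'⟩ : B') * ⟨φ p, B'.algebraMap_mem p⟩ := by
      ext
      exact hyspec.symm
    have := hg' x
    rw [hxeq, map_mul, hg' p] at this
    rw [Ideal.mem_span_singleton]
    refine ⟨g' ⟨y, hyB'⟩, ?_⟩
    show g x = π' * g' ⟨y, hyB'⟩
    rw [← this, hgp]; ring
  · -- g(I) ⊆ πC implies factorization
    intro hIC
    have hmemS : ∀ z ∈ B', ∃ c : C, Spec z c := by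
      intro z hz
      rw [hB'] at hz
      induction hz using Algebra.adjoin_induction with
      | mem y hy =>
        obtain ⟨x, hxI, hyx⟩ := hy
        have hgx : g x ∈ Ideal.span {π'} := hIC (Ideal.mem_map_of_mem _ hxI)
        obtain ⟨c, hc⟩ := Ideal.mem_span_singleton.mp hgx
        refine ⟨c, ?_⟩
        intro n b hb
        have key : φ (p * b) = φ (p ^ n * x) := by
          rw [map_mul, map_mul, map_pow, hb, ← hyx]
          ring
        have keyB := hφinj _ _ key
        have keyC := congrArg g keyB
        rw [map_mul, map_mul, map_pow, hgp, hc] at keyC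
        apply hCcancel
        rw [keyC]; ring
      | algebraMap b₀ => exact ⟨g b₀, halg b₀⟩
      | add z₁ z₂ hz₁ hz₂ ih₁ ih₂ =>
        obtain ⟨c₁, h1⟩ := ih₁
        obtain ⟨c₂, h2⟩ := ih₂
        exact ⟨c₁ + c₂, hadd _ _ _ _ h1 h2⟩
      | mul z₁ z₂ hz₁ hz₂ ih₁ ih₂ =>
        obtain ⟨c₁, h1⟩ := ih₁
        obtain ⟨c₂, h2⟩ := ih₂
        exact ⟨c₁ * c₂, hmul _ _ _ _ h1 h2⟩
    set F : B' → C := fun z => (hmemS z.1 z.2).choose with hF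
    have Fspec : ∀ z : B', Spec z.1 (F z) := fun z => (hmemS z.1 z.2).choose_spec
    refine ⟨{ toFun := F
              map_one' := ?_
              map_mul' := ?_
              map_zero' := ?_
              map_add' := ?_ }, ?_⟩
    · have h1 : Spec ((1 : B') : L) (g 1) := by
        have : ((1 : B') : L) = φ 1 := by simp
        rw [this]; exact halg 1
      rw [map_one] at h1
      exact huniq _ _ _ (Fspec 1) h1
    · intro z w
      have : Spec ((z * w : B') : L) (F z * F w) := by
        have hcoe : ((z * w : B') : L) = (z : L) * (w : L) := rfl
        rw [hcoe]
        exact hmul _ _ _ _ (Fspec z) (Fspec w)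
      exact huniq _ _ _ (Fspec (z * w)) this
    · have h0 : Spec ((0 : B') : L) (g 0) := by
        have : ((0 : B') : L) = φ 0 := by simp
        rw [this]; exact halg 0
      rw [map_zero] at h0
      exact huniq _ _ _ (Fspec 0) h0
    · intro z w
      have : Spec ((z + w : B') : L) (F z + F w) := by
        have hcoe : ((z + w : B') : L) = (z : L) + (w : L) := rfl
        rw [hcoe]
        exact hadd _ _ _ _ (Fspec z) (Fspec w)
      exact huniq _ _ _ (Fspec (z + w)) this
    · intro b
      exact huniq _ _ _ (Fspec ⟨φ b, B'.algebraMap_mem b⟩) (halg b)
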